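/- arXiv:2005.04051 — 5 statements merged into one kernel-verified Lean document; each statement's English description precedes it below -/
import Mathlib

section
/- Let D : Fin n → ℝ^d be a design, δ ∈ ℝ^d a tolerance vector with δ_i ≥ 0 for all i, and O ⊆ ℕ^d an order ideal that is numerically stable for (D, δ). Then O is weakly maximal (for every γ in the corner set of O, X^γ(D) numerically depends on O at (D, δ)) if and only if O is maximal (no order ideal that is numerically stable for (D, δ) properly contains O). -/
open Finset

/-- An order ideal (hierarchical model) in ℕ^d: a finite set of exponent vectors
that is downward closed for the componentwise partial order. -/
def IsOrderIdeal {d : ℕ} (O : Finset (Fin d → ℕ)) : Prop :=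
  ∀ α ∈ O, ∀ β : Fin d → ℕ, (∀ i, β i ≤ α i) → β ∈ O

/-- γ belongs to the corner set of O: γ is a minimal element of the complement of O
with respect to the componentwise partial order. -/
def InCorner {d : ℕ} (O : Finset (Fin d → ℕ)) (γ : Fin d → ℕ) : Prop :=
  γ ∉ O ∧ ∀ β : Fin d → ℕ, β ∉ O → (∀ i, β i ≤ γ i) → β = γ

/-- Evaluation (design) vector of the monomial X^α at the design D. -/
def evalVec {n d : ℕ} (D : Fin n → Fin d → ℝ) (α : Fin d → ℕ) : Fin n → ℝ :=
  fun j => ∏ i, (D j i) ^ (α i)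

/-- D' is a δ-perturbation of D. -/
def IsPerturbation {n d : ℕ} (δ : Fin d → ℝ) (D D' : Fin n → Fin d → ℝ) : Prop :=
  ∀ j : Fin n, ∀ i : Fin d, |D' j i - D j i| < δ i

/-- O is numerically stable for the empirical design (D, δ): for every δ-perturbation D'
of D, the family of evaluation vectors (X^α(D'))_{α ∈ O} is linearly independent. -/
def NumStable {n d : ℕ} (D : Fin n → Fin d → ℝ) (δ : Fin d → ℝ)
    (O : Finset (Fin d → ℕ)) : Prop :=
  ∀ D' : Fin n → Fin d → ℝ, IsPerturbation δ D D' →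
    LinearIndependent ℝ (fun α : {x // x ∈ O} => evalVec D' α.1)

/-- X^γ(D) numerically depends on O at (D, δ): there is a δ-perturbation D' of D such
that X^γ(D') lies in the linear span of the evaluation vectors of O at D'. -/
def NumDepends {n d : ℕ} (D : Fin n → Fin d → ℝ) (δ : Fin d → ℝ)
    (O : Finset (Fin d → ℕ)) (γ : Fin d → ℕ) : Prop :=
  ∃ D' : Fin n → Fin d → ℝ, IsPerturbation δ D D' ∧
    evalVec D' γ ∈ Submodule.span ℝ ((fun α => evalVec D' α) '' (O : Set (Fin d → ℕ)))

/-!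
Adjoining a single exponent γ ∉ O to a numerically stable set keeps it stable exactly when
X^γ is numerically independent of O; this is `linearIndepOn_insert`, applied at every
δ-perturbation simultaneously. A properly larger stable order ideal O' contains a corner γ of
O (a componentwise-minimal element of O' \ O), and O ∪ {γ} ⊆ O' is then stable, so X^γ is
independent of O. Conversely, if some corner γ is independent of O, then O ∪ {γ} is a stable
order ideal properly containing O.
-/

section OrderIdeal

variable {d : ℕ} {O O' : Finset (Fin d → ℕ)} {γ : Fin d → ℕ}

theorem IsOrderIdeal.insert_of_inCorner (hO : IsOrderIdeal O) (hγ : InCorner O γ) :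
    IsOrderIdeal (insert γ O) := by
  intro α hα β hβα
  by_cases hβ : β ∈ O
  · exact mem_insert_of_mem hβ
  rcases mem_insert.1 hα with rfl | hαO
  · rw [hγ.2 β hβ hβα]
    exact mem_insert_self _ _
  · exact absurd (hO α hαO β hβα) hβ

theorem exists_mem_inCorner_of_ssubset (hO' : IsOrderIdeal O') (hss : O ⊂ O') :
    ∃ γ ∈ O', InCorner O γ := by
  obtain ⟨γ, hγmin⟩ := Finset.exists_minimal (sdiff_nonempty.2 (not_subset_of_ssubset hss))
  obtain ⟨hγO', hγO⟩ := mem_sdiff.1 hγmin.prop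
  refine ⟨γ, hγO', hγO, fun β hβ hβγ => ?_⟩
  have hβ' : β ∈ O' \ O := mem_sdiff.2 ⟨hO' γ hγO' β hβγ, hβ⟩
  exact le_antisymm (Pi.le_def.2 hβγ) (hγmin.2 hβ' (Pi.le_def.2 hβγ))

end OrderIdeal

section Stability

variable {n d : ℕ} {D : Fin n → Fin d → ℝ} {δ : Fin d → ℝ} {O O' : Finset (Fin d → ℕ)}
  {γ : Fin d → ℕ}

theorem numStable_iff_linearIndepOn :
    NumStable D δ O ↔
      ∀ D', IsPerturbation δ D D' → LinearIndepOn ℝ (evalVec D') (O : Set (Fin d → ℕ)) :=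
  Iff.rfl

theorem NumStable.mono (h : NumStable D δ O') (hOO' : O ⊆ O') : NumStable D δ O := by
  rw [numStable_iff_linearIndepOn] at h ⊢
  exact fun D' hD' => (h D' hD').mono (coe_subset.2 hOO')

theorem numStable_insert_iff (hγ : γ ∉ O) :
    NumStable D δ (insert γ O) ↔ NumStable D δ O ∧ ¬ NumDepends D δ O γ := by
  simp only [numStable_iff_linearIndepOn, coe_insert, linearIndepOn_insert (mem_coe.not.2 hγ),
    NumDepends, not_exists, not_and]
  exact ⟨fun h => ⟨fun D' hD' => (h D' hD').1, fun D' hD' => (h D' hD').2⟩,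
    fun h D' hD' => ⟨h.1 D' hD', h.2 D' hD'⟩⟩

end Stability

theorem stmt_8_general {n d : ℕ} (D : Fin n → Fin d → ℝ) (δ : Fin d → ℝ)
    (O : Finset (Fin d → ℕ)) (hO : IsOrderIdeal O)
    (hstab : NumStable D δ O) :
    (∀ γ : Fin d → ℕ, InCorner O γ → NumDepends D δ O γ) ↔
    (¬ ∃ O' : Finset (Fin d → ℕ), IsOrderIdeal O' ∧ NumStable D δ O' ∧ O ⊂ O') := by
  constructor
  · rintro hdep ⟨O', hO', hstab', hss⟩
    obtain ⟨γ, hγO', hγ⟩ := exists_mem_inCorner_of_ssubset hO' hss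
    have hstab_insert : NumStable D δ (insert γ O) :=
      hstab'.mono (insert_subset hγO' hss.subset)
    exact ((numStable_insert_iff hγ.1).1 hstab_insert).2 (hdep γ hγ)
  · intro hmax γ hγ
    by_contra hindep
    exact hmax ⟨insert γ O, hO.insert_of_inCorner hγ,
      (numStable_insert_iff hγ.1).2 ⟨hstab, hindep⟩, ssubset_insert hγ.1⟩

theorem stmt_8 {n d : ℕ} (D : Fin n → Fin d → ℝ) (δ : Fin d → ℝ)
    (hδ : ∀ i, 0 ≤ δ i) (O : Finset (Fin d → ℕ)) (hO : IsOrderIdeal O)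
    (hstab : NumStable D δ O) :
    (∀ γ : Fin d → ℕ, InCorner O γ → NumDepends D δ O γ) ↔
    (¬ ∃ O' : Finset (Fin d → ℕ), IsOrderIdeal O' ∧ NumStable D δ O' ∧ O ⊂ O') :=
  stmt_8_general D δ O hO hstab
end

section
/- Let D : Fin n → ℝ^d be a design, let p ∈ ℝ^d, and let D + p denote the translated design defined by (D + p) j = D j + p. Then for every order ideal O ⊆ ℕ^d, the linear span in ℝ^n of the evaluation vectors {X^α(D + p) : α ∈ O} equals the linear span of {X^α(D) : α ∈ O}. -/
open Finset

lemma evalVec_translate_mem_span {n d : ℕ} (D : Fin n → Fin d → ℝ) (p : Fin d → ℝ)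
    (O : Finset (Fin d → ℕ)) (hO : IsOrderIdeal O)
    (α : Fin d → ℕ) (hα : α ∈ O) :
    evalVec (fun j => D j + p) α ∈
      Submodule.span ℝ ((fun β => evalVec D β) '' (O : Set (Fin d → ℕ))) := by
  have key : evalVec (fun j => D j + p) α =
      ∑ β ∈ Fintype.piFinset (fun i => Finset.range (α i + 1)),
        (∏ i, (((α i).choose (β i) : ℝ) * p i ^ (α i - β i))) • evalVec D β := by
    funext j
    simp only [evalVec, Finset.sum_apply, Pi.smul_apply, smul_eq_mul, Pi.add_apply]
    have h1 : ∀ i : Fin d, (D j i + p i) ^ α i =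
        ∑ k ∈ Finset.range (α i + 1),
          (((α i).choose k : ℝ) * p i ^ (α i - k)) * D j i ^ k := by
      intro i
      rw [add_pow]
      apply Finset.sum_congr rfl
      intro k _
      ring
    calc (∏ i, (D j i + p i) ^ α i)
        = ∏ i, ∑ k ∈ Finset.range (α i + 1),
            (((α i).choose k : ℝ) * p i ^ (α i - k)) * D j i ^ k := by
          exact Finset.prod_congr rfl fun i _ => h1 i
      _ = ∑ β ∈ Fintype.piFinset (fun i => Finset.range (α i + 1)),
            ∏ i, (((α i).choose (β i) : ℝ) * p i ^ (α i - β i)) * D j i ^ β i := by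
          rw [Finset.prod_univ_sum]
      _ = _ := by
          apply Finset.sum_congr rfl
          intro β _
          rw [Finset.prod_mul_distrib]
  rw [key]
  apply Submodule.sum_mem
  intro β hβ
  apply Submodule.smul_mem
  apply Submodule.subset_span
  refine ⟨β, ?_, rfl⟩
  have : ∀ i, β i ≤ α i := by
    intro i
    have := Finset.mem_range.mp ((Fintype.mem_piFinset.mp hβ) i)
    omega
  exact hO α hα β this

lemma span_translate_le {n d : ℕ} (D : Fin n → Fin d → ℝ) (p : Fin d → ℝ)
    (O : Finset (Fin d → ℕ)) (hO : IsOrderIdeal O) :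
    Submodule.span ℝ ((fun α => evalVec (fun j => D j + p) α) '' (O : Set (Fin d → ℕ))) ≤
    Submodule.span ℝ ((fun α => evalVec D α) '' (O : Set (Fin d → ℕ))) := by
  rw [Submodule.span_le]
  rintro - ⟨α, hα, rfl⟩
  exact evalVec_translate_mem_span D p O hO α hα

theorem stmt_11 {n d : ℕ} (D : Fin n → Fin d → ℝ) (p : Fin d → ℝ)
    (O : Finset (Fin d → ℕ)) (hO : IsOrderIdeal O) :
    Submodule.span ℝ ((fun α => evalVec (fun j => D j + p) α) '' (O : Set (Fin d → ℕ))) =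
    Submodule.span ℝ ((fun α => evalVec D α) '' (O : Set (Fin d → ℕ))) := by
  apply le_antisymm
  · exact span_translate_le D p O hO
  · have h := span_translate_le (fun j => D j + p) (-p) O hO
    have heq : (fun j => (fun j => D j + p) j + (-p)) = D := by
      funext j; simp
    rwa [heq] at h
end

section
/- Let D : Fin n → ℝ^d be a design, let p ∈ ℝ^d, and let D + p denote the translated design defined by (D + p) j = D j + p. Then an order ideal O ⊆ ℕ^d is identifiable by D + p if and only if it is identifiable by D; consequently the statistical fan of the translated design equals that of the original design: S(D + p) = S(D). -/
open Finset

/-- O is identifiable by D: the evaluation vectors of O at D are linearly independent. -/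
def Identifiable {n d : ℕ} (D : Fin n → Fin d → ℝ) (O : Finset (Fin d → ℕ)) : Prop :=
  LinearIndependent ℝ (fun α : {x // x ∈ O} => evalVec D α.1)

open MvPolynomial

noncomputable def tr {d : ℕ} (p : Fin d → ℝ) :
    MvPolynomial (Fin d) ℝ →ₐ[ℝ] MvPolynomial (Fin d) ℝ :=
  aeval (fun i => X i + C (p i))

lemma tr_inv {d : ℕ} (p : Fin d → ℝ) (f : MvPolynomial (Fin d) ℝ) :
    tr (-p) (tr p f) = f := by
  have : (tr (-p)).comp (tr p) = AlgHom.id ℝ (MvPolynomial (Fin d) ℝ) := by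
    rw [tr, tr, comp_aeval]
    rw [← aeval_X_left (R := ℝ) (σ := Fin d)]
    congr 1
    funext i
    simp [algebraMap_eq]
  calc tr (-p) (tr p f) = ((tr (-p)).comp (tr p)) f := rfl
    _ = f := by rw [this]; rfl

lemma deg_bound {d : ℕ} (p : Fin d → ℝ) (s : Fin d →₀ ℕ) (i : Fin d) :
    degreeOf i (s.prod fun k t => (X k + C (p k) : MvPolynomial (Fin d) ℝ) ^ t) ≤ s i := by
  rw [Finsupp.prod]
  calc degreeOf i (∏ k ∈ s.support, (X k + C (p k) : MvPolynomial (Fin d) ℝ) ^ s k)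
      ≤ ∑ k ∈ s.support, degreeOf i ((X k + C (p k) : MvPolynomial (Fin d) ℝ) ^ s k) :=
        degreeOf_prod_le i _ _
    _ ≤ ∑ k ∈ s.support, s k * degreeOf i (X k + C (p k) : MvPolynomial (Fin d) ℝ) := by
        exact Finset.sum_le_sum fun k _ => degreeOf_pow_le i _ _
    _ ≤ ∑ k ∈ s.support, (if i = k then s k else 0) := by
        refine Finset.sum_le_sum fun k _ => ?_
        have h1 : degreeOf i (X k + C (p k) : MvPolynomial (Fin d) ℝ) ≤ if i = k then 1 else 0 := by
          refine le_trans (degreeOf_add_le _ _ _) ?_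
          simp [degreeOf_X, degreeOf_C]
        rcases eq_or_ne i k with h | h
        · subst h; simpa using Nat.mul_le_mul_left (s i) h1
        · simp [h] at h1 ⊢
          omega
    _ = if i ∈ s.support then s i else 0 := Finset.sum_ite_eq s.support i (fun k => s k)
    _ ≤ s i := by split <;> omega

lemma key {n d : ℕ} (D : Fin n → Fin d → ℝ) (p : Fin d → ℝ) (O : Finset (Fin d → ℕ))
    (hO : IsOrderIdeal O) (h : Identifiable D O) :
    Identifiable (fun j => D j + p) O := by
  classical
  set e : (Fin d → ℕ) → (Fin d →₀ ℕ) := fun a => Finsupp.equivFunOnFinite.symm a with he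
  have he_app : ∀ (a : Fin d → ℕ) (i : Fin d), (e a) i = a i := by
    intro a i; simp [he]
  have he_inj : Function.Injective e := Equiv.injective _
  rw [Identifiable, Fintype.linearIndependent_iff] at h ⊢
  intro g hg
  set f : MvPolynomial (Fin d) ℝ := ∑ α : {x // x ∈ O}, monomial (e α.1) (g α) with hf
  -- Step A : evaluations of the translated polynomial vanish
  have hA : ∀ j, eval (D j) (tr p f) = 0 := by
    intro j
    have hcomp : (aeval (D j) : MvPolynomial (Fin d) ℝ →ₐ[ℝ] ℝ).comp (tr p)
        = aeval (fun i => D j i + p i) := by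
      rw [tr, comp_aeval]
      congr 1
      funext i
      simp [Algebra.algebraMap_self]
    have h1 : eval (D j) (tr p f) = aeval (fun i => D j i + p i) f := by
      have := congrArg (fun φ => φ f) hcomp
      simpa using this
    rw [h1, hf, map_sum]
    have h2 : ∀ α : {x // x ∈ O},
        aeval (fun i => D j i + p i) (monomial (e α.1) (g α))
          = g α * ∏ i, (D j i + p i) ^ (α.1 i) := by
      intro α
      rw [aeval_monomial]
      simp [Finsupp.prod_pow, he_app]
    rw [Finset.sum_congr rfl (fun α _ => h2 α)]
    have := congrFun hg j
    simpa [evalVec] using this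
  -- Step B : support of tr p f lies in the image of O
  have hsupp : (tr p f).support ⊆ O.image e := by
    intro β hβ
    rw [hf, map_sum] at hβ
    have hβ' := MvPolynomial.support_sum hβ
    obtain ⟨α, -, hαβ⟩ := Finset.mem_biUnion.mp hβ'
    have hmono : tr p (monomial (e α.1) (g α))
        = C (g α) * (e α.1).prod fun k t => (X k + C (p k) : MvPolynomial (Fin d) ℝ) ^ t := by
      rw [tr, aeval_monomial, algebraMap_eq]
    have hle : ∀ i, β i ≤ α.1 i := by
      intro i
      have h3 : β i ≤ degreeOf i (tr p (monomial (e α.1) (g α))) :=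
        monomial_le_degreeOf i hαβ
      rw [hmono] at h3
      calc β i ≤ degreeOf i ((C (g α) : MvPolynomial (Fin d) ℝ))
            + degreeOf i ((e α.1).prod fun k t => (X k + C (p k) : MvPolynomial (Fin d) ℝ) ^ t) :=
          le_trans h3 (degreeOf_mul_le _ _ _)
        _ ≤ 0 + (e α.1) i := by
            gcongr
            · exact le_of_eq (degreeOf_C _ _)
            · exact deg_bound p _ i
        _ = α.1 i := by rw [zero_add, he_app]
    have hβO : (fun i => β i) ∈ O := hO α.1 α.2 _ hle
    refine Finset.mem_image.mpr ⟨fun i => β i, hβO, ?_⟩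
    exact Finsupp.equivFunOnFinite_symm_coe β
  have hβeq : ∀ β : Fin d →₀ ℕ, e (fun i => β i) = β := by
    intro β
    simp [he]
  -- note: e (⇑β) = β
  have hsupp' : (tr p f).support ⊆ O.image e := hsupp
  -- Step C : coefficients of tr p f give a vanishing combination for D
  have hC : ∀ β : {x // x ∈ O}, coeff (e β.1) (tr p f) = 0 := by
    apply h
    funext j
    have hsum : (∑ β : {x // x ∈ O}, coeff (e β.1) (tr p f) • evalVec D β.1) j
        = ∑ β : {x // x ∈ O}, coeff (e β.1) (tr p f) * ∏ i, (D j i) ^ (β.1 i) := by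
      simp [evalVec]
    rw [hsum]
    have h4 : ∑ β : {x // x ∈ O}, coeff (e β.1) (tr p f) * ∏ i, (D j i) ^ (β.1 i)
        = ∑ β ∈ O, coeff (e β) (tr p f) * ∏ i, (D j i) ^ (β i) :=
      Finset.sum_coe_sort O (fun β => coeff (e β) (tr p f) * ∏ i, (D j i) ^ (β i))
    have h5 : ∑ β ∈ O, coeff (e β) (tr p f) * ∏ i, (D j i) ^ (β i)
        = ∑ t ∈ O.image e, coeff t (tr p f) * ∏ i, (D j i) ^ (t i) := by
      rw [Finset.sum_image (fun x _ y _ hxy => he_inj hxy)]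
      refine Finset.sum_congr rfl fun β _ => ?_
      simp [he_app]
    have h6 : ∑ t ∈ O.image e, coeff t (tr p f) * ∏ i, (D j i) ^ (t i)
        = ∑ t ∈ (tr p f).support, coeff t (tr p f) * ∏ i, (D j i) ^ (t i) := by
      refine (Finset.sum_subset hsupp fun t _ ht => ?_).symm
      rw [notMem_support_iff.mp ht, zero_mul]
    rw [h4, h5, h6, ← eval_eq', hA j]
    rfl
  -- Step D : tr p f = 0
  have hD : tr p f = 0 := by
    apply MvPolynomial.ext
    intro t
    rw [coeff_zero]
    by_cases ht : t ∈ (tr p f).support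
    · obtain ⟨β, hβO, hβt⟩ := Finset.mem_image.mp (hsupp ht)
      rw [← hβt]
      exact hC ⟨β, hβO⟩
    · exact notMem_support_iff.mp ht
  -- Step E : f = 0
  have hE : f = 0 := by
    have := tr_inv p f
    rw [hD, map_zero] at this
    exact this.symm
  -- Step F : extract coefficients
  intro α
  have h7 : coeff (e α.1) f = g α := by
    rw [hf, coeff_sum]
    rw [Finset.sum_eq_single α]
    · rw [coeff_monomial, if_pos rfl]
    · intro β _ hβα
      rw [coeff_monomial, if_neg]
      intro hc
      exact hβα (Subtype.ext (he_inj hc))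
    · intro hα
      exact absurd (Finset.mem_univ α) hα
  rw [hE, coeff_zero] at h7
  exact h7.symm

theorem stmt_12 {n d : ℕ} (D : Fin n → Fin d → ℝ) (p : Fin d → ℝ) :
    (∀ O : Finset (Fin d → ℕ), IsOrderIdeal O →
      (Identifiable (fun j => D j + p) O ↔ Identifiable D O)) ∧
    {O : Finset (Fin d → ℕ) | IsOrderIdeal O ∧ Identifiable (fun j => D j + p) O ∧ O.card = n} =
    {O : Finset (Fin d → ℕ) | IsOrderIdeal O ∧ Identifiable D O ∧ O.card = n} := by
  
  constructor
  · intro O hO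
    constructor
    · intro hI
      have h2 := key (fun j => D j + p) (-p) O hO hI
      have heq : (fun j => (fun j' => D j' + p) j + (-p)) = D := by
        funext j
        simp
      rwa [heq] at h2
    · intro hI
      exact key D p O hO hI
  · ext O
    simp only [Set.mem_setOf_eq]
    constructor
    · rintro ⟨h1, h2, h3⟩
      refine ⟨h1, ?_, h3⟩
      have h4 := key (fun j => D j + p) (-p) O h1 h2
      have heq : (fun j => (fun j' => D j' + p) j + (-p)) = D := by
        funext j
        simp
      rwa [heq] at h4
    · rintro ⟨h1, h2, h3⟩
      exact ⟨h1, key D p O h1 h2, h3⟩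
end

section
/- Let D : Fin n → ℝ^d be a design, δ ∈ ℝ^d a tolerance vector with δ_i ≥ 0 for all i, p ∈ ℝ^d, and let D + p denote the translated design defined by (D + p) j = D j + p. Then an order ideal O ⊆ ℕ^d is numerically stable for (D + p, δ) if and only if it is numerically stable for (D, δ); consequently the numerical statistical fan is translation invariant: S_num(D + p, δ) = S_num(D, δ). -/
open Finset

/-!
Translating a design by `p` acts on the monomials by the binomial expansion
`(x + p)^α = ∑_{β ≤ α} (∏ᵢ C(αᵢ, βᵢ) pᵢ^(αᵢ - βᵢ)) x^β`, which only involves exponents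
`β ≤ α`. Hence, on an order ideal `O`, the evaluation vectors at `D + p` and at `D` span the
same space (use `-p` for the reverse inclusion), and `|O|` vectors are linearly independent
iff they span a space of dimension `|O|`. Since `D'` is a `δ`-perturbation of `D` iff
`D' + p` is one of `D + p`, numerical stability, and with it the fan, is translation invariant.
-/

lemma evalVec_translate {n d : ℕ} (D : Fin n → Fin d → ℝ) (p : Fin d → ℝ) (α : Fin d → ℕ) :
    evalVec (fun j => D j + p) α =
      ∑ β ∈ Fintype.piFinset (fun i => range (α i + 1)),
        (∏ i, p i ^ (α i - β i) * ((α i).choose (β i) : ℝ)) • evalVec D β := by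
  funext j
  simp only [evalVec, Finset.sum_apply, Pi.smul_apply, smul_eq_mul, Pi.add_apply, add_pow]
  rw [Finset.prod_univ_sum]
  refine Finset.sum_congr rfl fun β _ => ?_
  rw [← Finset.prod_mul_distrib]
  exact Finset.prod_congr rfl fun i _ => by ring

lemma span_evalVec_translate_le {n d : ℕ} (D : Fin n → Fin d → ℝ) (p : Fin d → ℝ)
    {O : Finset (Fin d → ℕ)} (hO : IsOrderIdeal O) :
    Submodule.span ℝ (Set.range fun α : O => evalVec (fun j => D j + p) α) ≤
      Submodule.span ℝ (Set.range fun α : O => evalVec D α) := by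
  rw [Submodule.span_le]
  rintro _ ⟨⟨α, hα⟩, rfl⟩
  change evalVec (fun j => D j + p) α ∈ _
  rw [evalVec_translate]
  refine Submodule.sum_mem _ fun β hβ => Submodule.smul_mem _ _ (Submodule.subset_span ?_)
  have hβα : ∀ i, β i ≤ α i := fun i =>
    Nat.lt_succ_iff.mp (Finset.mem_range.mp (Fintype.mem_piFinset.mp hβ i))
  exact ⟨⟨β, hO α hα β hβα⟩, rfl⟩

lemma span_evalVec_translate {n d : ℕ} (D : Fin n → Fin d → ℝ) (p : Fin d → ℝ)
    {O : Finset (Fin d → ℕ)} (hO : IsOrderIdeal O) :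
    Submodule.span ℝ (Set.range fun α : O => evalVec (fun j => D j + p) α) =
      Submodule.span ℝ (Set.range fun α : O => evalVec D α) := by
  refine le_antisymm (span_evalVec_translate_le D p hO) ?_
  simpa using span_evalVec_translate_le (fun j => D j + p) (-p) hO

lemma linearIndependent_evalVec_translate_iff {n d : ℕ} (D : Fin n → Fin d → ℝ)
    (p : Fin d → ℝ) {O : Finset (Fin d → ℕ)} (hO : IsOrderIdeal O) :
    LinearIndependent ℝ (fun α : O => evalVec (fun j => D j + p) α) ↔
      LinearIndependent ℝ (fun α : O => evalVec D α) := by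
  rw [linearIndependent_iff_card_eq_finrank_span, linearIndependent_iff_card_eq_finrank_span,
    Set.finrank, Set.finrank, span_evalVec_translate D p hO]

lemma isPerturbation_translate_iff {n d : ℕ} (δ : Fin d → ℝ) (D D' : Fin n → Fin d → ℝ)
    (p : Fin d → ℝ) :
    IsPerturbation δ (fun j => D j + p) (fun j => D' j + p) ↔ IsPerturbation δ D D' := by
  simp only [IsPerturbation, Pi.add_apply, add_sub_add_right_eq_sub]

lemma numStable_translate_iff {n d : ℕ} (D : Fin n → Fin d → ℝ) (δ : Fin d → ℝ)
    (p : Fin d → ℝ) {O : Finset (Fin d → ℕ)} (hO : IsOrderIdeal O) :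
    NumStable (fun j => D j + p) δ O ↔ NumStable D δ O := by
  constructor
  · intro h D' hD'
    exact (linearIndependent_evalVec_translate_iff D' p hO).mp
      (h _ ((isPerturbation_translate_iff δ D D' p).mpr hD'))
  · intro h D'' hD''
    obtain ⟨D', rfl⟩ : ∃ D', D'' = fun j => D' j + p := ⟨fun j => D'' j - p, by simp⟩
    exact (linearIndependent_evalVec_translate_iff D' p hO).mpr
      (h _ ((isPerturbation_translate_iff δ D D' p).mp hD''))

theorem stmt_13_general {n d : ℕ} (D : Fin n → Fin d → ℝ) (δ : Fin d → ℝ)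
    (p : Fin d → ℝ) :
    (∀ O : Finset (Fin d → ℕ), IsOrderIdeal O →
      (NumStable (fun j => D j + p) δ O ↔ NumStable D δ O)) ∧
    {M : Finset (Fin d → ℕ) | IsOrderIdeal M ∧ NumStable (fun j => D j + p) δ M ∧
      ¬ ∃ O' : Finset (Fin d → ℕ), IsOrderIdeal O' ∧ NumStable (fun j => D j + p) δ O' ∧ M ⊂ O'} =
    {M : Finset (Fin d → ℕ) | IsOrderIdeal M ∧ NumStable D δ M ∧
      ¬ ∃ O' : Finset (Fin d → ℕ), IsOrderIdeal O' ∧ NumStable D δ O' ∧ M ⊂ O'} := by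
  have key := fun O (hO : IsOrderIdeal O) => numStable_translate_iff D δ p hO
  refine ⟨key, Set.ext fun M => and_congr_right fun hM => and_congr (key M hM) ?_⟩
  exact not_congr <| exists_congr fun O' =>
    and_congr_right fun hO' => and_congr_left' (key O' hO')

theorem stmt_13 {n d : ℕ} (D : Fin n → Fin d → ℝ) (δ : Fin d → ℝ)
    (hδ : ∀ i, 0 ≤ δ i) (p : Fin d → ℝ) :
    (∀ O : Finset (Fin d → ℕ), IsOrderIdeal O →
      (NumStable (fun j => D j + p) δ O ↔ NumStable D δ O)) ∧
    {M : Finset (Fin d → ℕ) | IsOrderIdeal M ∧ NumStable (fun j => D j + p) δ M ∧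
      ¬ ∃ O' : Finset (Fin d → ℕ), IsOrderIdeal O' ∧ NumStable (fun j => D j + p) δ O' ∧ M ⊂ O'} =
    {M : Finset (Fin d → ℕ) | IsOrderIdeal M ∧ NumStable D δ M ∧
      ¬ ∃ O' : Finset (Fin d → ℕ), IsOrderIdeal O' ∧ NumStable D δ O' ∧ M ⊂ O'} :=
  stmt_13_general D δ p
end

section
/- Let D : Fin n → ℝ^d be a design, δ ∈ ℝ^d a tolerance vector with δ_i ≥ 0 for all i, and s ∈ ℝ^d with s_i ≠ 0 for all i. Define the componentwise scaled design D' by (D' j)_i = s_i · (D j)_i and the scaled tolerance δ' by δ'_i = |s_i| · δ_i. Then an order ideal O ⊆ ℕ^d is numerically stable for (D', δ') if and only if it is numerically stable for (D, δ); consequently S_num(D', δ') = S_num(D, δ). -/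
open Finset

lemma li_smul_iff' {n : ℕ} {ι : Type*} (v : ι → Fin n → ℝ) (c : ι → ℝ) (hc : ∀ i, c i ≠ 0) :
    LinearIndependent ℝ (fun i => c i • v i) ↔ LinearIndependent ℝ v := by
  constructor
  · intro h
    have h2 := h.units_smul (fun i => (Units.mk0 (c i) (hc i))⁻¹)
    have : ((fun i => (Units.mk0 (c i) (hc i))⁻¹) • fun i => c i • v i) = v := by
      funext i
      simp [Pi.smul_apply', Units.smul_def, smul_smul, inv_mul_cancel₀ (hc i)]
    rwa [this] at h2
  · intro h
    have h2 := h.units_smul (fun i => Units.mk0 (c i) (hc i))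
    have : ((fun i => Units.mk0 (c i) (hc i)) • v) = fun i => c i • v i := by
      funext i; simp [Pi.smul_apply']
    rwa [this] at h2

lemma evalVec_scale {n d : ℕ} (s : Fin d → ℝ) (E : Fin n → Fin d → ℝ) (α : Fin d → ℕ) :
    evalVec (fun j i => s i * E j i) α = (∏ i, s i ^ α i) • evalVec E α := by
  funext j
  simp [evalVec, mul_pow, Finset.prod_mul_distrib, smul_eq_mul]

lemma numStable_scale_iff {n d : ℕ} (D : Fin n → Fin d → ℝ) (δ : Fin d → ℝ)
    (s : Fin d → ℝ) (hs : ∀ i, s i ≠ 0) (O : Finset (Fin d → ℕ)) :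
    NumStable (fun j i => s i * D j i) (fun i => |s i| * δ i) O ↔ NumStable D δ O := by
  have hc : ∀ α : Fin d → ℕ, (∏ i, s i ^ α i) ≠ 0 := fun α =>
    Finset.prod_ne_zero_iff.2 fun i _ => pow_ne_zero _ (hs i)
  constructor
  · intro h D' hD'
    have hpert : IsPerturbation (fun i => |s i| * δ i)
        (fun j i => s i * D j i) (fun j i => s i * D' j i) := by
      intro j i
      have : s i * D' j i - s i * D j i = s i * (D' j i - D j i) := by ring
      rw [this, abs_mul]
      exact mul_lt_mul_of_pos_left (hD' j i) (abs_pos.2 (hs i))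
    have h2 := h _ hpert
    have := (li_smul_iff' (fun α : {x // x ∈ O} => evalVec D' α.1)
        (fun α => ∏ i, s i ^ (α.1 i)) (fun α => hc α.1)).1 ?_
    · exact this
    · have heq : (fun α : {x // x ∈ O} => (∏ i, s i ^ (α.1 i)) • evalVec D' α.1) =
          fun α : {x // x ∈ O} => evalVec (fun j i => s i * D' j i) α.1 := by
        funext α; rw [evalVec_scale]
      rw [heq]; exact h2
  · intro h D'' hD''
    set E : Fin n → Fin d → ℝ := fun j i => (s i)⁻¹ * D'' j i with hE
    have hEs : ∀ j i, s i * E j i = D'' j i := by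
      intro j i; exact mul_inv_cancel_left₀ (hs i) _
    have hpert : IsPerturbation δ D E := by
      intro j i
      have h1 : E j i - D j i = (s i)⁻¹ * (D'' j i - s i * D j i) := by
        simp [hE, mul_sub, inv_mul_cancel_left₀ (hs i)]
      rw [h1, abs_mul, abs_inv]
      have h2 := hD'' j i
      have hpos : (0:ℝ) < |s i| := abs_pos.2 (hs i)
      calc |s i|⁻¹ * |D'' j i - s i * D j i| < |s i|⁻¹ * (|s i| * δ i) := by
            exact mul_lt_mul_of_pos_left h2 (inv_pos.2 hpos)
        _ = δ i := by field_simp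
    have h2 := h E hpert
    have heq : (fun α : {x // x ∈ O} => evalVec D'' α.1) =
        fun α : {x // x ∈ O} => (∏ i, s i ^ (α.1 i)) • evalVec E α.1 := by
      have hD2 : D'' = fun j i => s i * E j i := by
        funext j i; exact (hEs j i).symm
      funext α
      rw [hD2, evalVec_scale]
    rw [heq]
    exact (li_smul_iff' (fun α : {x // x ∈ O} => evalVec E α.1)
        (fun α => ∏ i, s i ^ (α.1 i)) (fun α => hc α.1)).2 h2

theorem stmt_14 {n d : ℕ} (D : Fin n → Fin d → ℝ) (δ : Fin d → ℝ)
    (hδ : ∀ i, 0 ≤ δ i) (s : Fin d → ℝ) (hs : ∀ i, s i ≠ 0) :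
    (∀ O : Finset (Fin d → ℕ), IsOrderIdeal O →
      (NumStable (fun j i => s i * D j i) (fun i => |s i| * δ i) O ↔ NumStable D δ O)) ∧
    {M : Finset (Fin d → ℕ) | IsOrderIdeal M ∧
        NumStable (fun j i => s i * D j i) (fun i => |s i| * δ i) M ∧
      ¬ ∃ O' : Finset (Fin d → ℕ), IsOrderIdeal O' ∧
          NumStable (fun j i => s i * D j i) (fun i => |s i| * δ i) O' ∧ M ⊂ O'} =
    {M : Finset (Fin d → ℕ) | IsOrderIdeal M ∧ NumStable D δ M ∧
      ¬ ∃ O' : Finset (Fin d → ℕ), IsOrderIdeal O' ∧ NumStable D δ O' ∧ M ⊂ O'} := by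
  have key := numStable_scale_iff D δ s hs
  refine ⟨fun O _ => key O, ?_⟩
  ext M
  simp only [Set.mem_setOf_eq, key]
end
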